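/- arXiv:math/0602290 — 3 statements merged into one kernel-verified Lean document; each statement's English description precedes it below -/
import Mathlib

section
/- Let f ∈ L^∞(ℝⁿ) with f = 0 for |x| ≥ M, and let μ = γ₁ + iγ₂ with γ₁, γ₂ orthonormal in ℝⁿ. Let u = N_μ^{-1} f be the Cauchy-transform solution of μ·∇u = f. Then there is C = C(M) such that |u(x)| ≤ C ‖f‖_{L^∞} ⟨x_T⟩^{-1} χ_{B(0,M)}(x_⊥) for all x, where x_T is the orthogonal projection of x onto span{γ₁,γ₂}, x_⊥ = x − x_T, and ⟨y⟩ = (1+|y|²)^{1/2}. -/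
open MeasureTheory Complex

/-- The Cauchy-transform solution `N_μ⁻¹ f` in the plane spanned by `γ₁, γ₂`. -/
noncomputable def cauchySol (n : ℕ) (γ₁ γ₂ : EuclideanSpace ℝ (Fin n))
    (f : EuclideanSpace ℝ (Fin n) → ℂ) (x : EuclideanSpace ℝ (Fin n)) : ℂ :=
  (1 / (2 * Real.pi) : ℂ) *
    ∫ y : ℝ × ℝ, ((y.1 : ℂ) + y.2 * I)⁻¹ * f (x - y.1 • γ₁ - y.2 • γ₂)

/-!
Write `w = y₁ + i y₂` and `z = ⟪x, γ₁⟫ + i ⟪x, γ₂⟫`, so that `‖z‖ = ‖x_T‖`. By Pythagoras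
`‖x - w.re γ₁ - w.im γ₂‖² = ‖x_⊥‖² + ‖w - z‖²`, so the integrand `w⁻¹ f(x - w.re γ₁ - w.im γ₂)`
vanishes identically unless `‖x_⊥‖ < M`, and otherwise it is supported in the disc `B(z, M)`.
Hence `‖u x‖ ≤ K/(2π) ∫_{B(z,M)} ‖w‖⁻¹ dw`, and this integral is `O(⟨z⟩⁻¹)`: for `‖z‖ ≤ 2M` it is
at most `∫_{B(0,3M)} ‖w‖⁻¹ dw = 6πM`, and for `‖z‖ > 2M` the integrand is at most `2/‖z‖`.
-/

open Metric Set Real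
open scoped RealInnerProductSpace

lemma inv_one_add_le_one_add_sq_rpow_neg_half {t : ℝ} (ht : 0 ≤ t) :
    (1 + t)⁻¹ ≤ (1 + t ^ 2) ^ (-(1 : ℝ) / 2) := by
  rw [neg_div, rpow_neg (by positivity), ← sqrt_eq_rpow]
  refine inv_anti₀ (by positivity) (sqrt_le_iff.2 ⟨by positivity, by nlinarith⟩)

section Geometry

variable {E : Type*} [NormedAddCommGroup E] [InnerProductSpace ℝ E] {γ₁ γ₂ : E}

lemma norm_smul_add_smul_sq (h₁ : ‖γ₁‖ = 1) (h₂ : ‖γ₂‖ = 1) (h₁₂ : ⟪γ₁, γ₂⟫ = 0) (a b : ℝ) :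
    ‖a • γ₁ + b • γ₂‖ ^ 2 = a ^ 2 + b ^ 2 := by
  have hγ₁ : ⟪γ₁, γ₁⟫ = 1 := by rw [real_inner_self_eq_norm_sq, h₁, one_pow]
  have hγ₂ : ⟪γ₂, γ₂⟫ = 1 := by rw [real_inner_self_eq_norm_sq, h₂, one_pow]
  rw [← real_inner_self_eq_norm_sq]
  simp only [inner_add_left, inner_add_right, real_inner_smul_left, real_inner_smul_right,
    hγ₁, hγ₂, h₁₂, real_inner_comm γ₁ γ₂]
  ring

noncomputable def planeCoord (γ₁ γ₂ x : E) : ℂ := ⟪x, γ₁⟫ + ⟪x, γ₂⟫ * I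

lemma norm_planeCoord (h₁ : ‖γ₁‖ = 1) (h₂ : ‖γ₂‖ = 1) (h₁₂ : ⟪γ₁, γ₂⟫ = 0) (x : E) :
    ‖planeCoord γ₁ γ₂ x‖ = ‖⟪x, γ₁⟫ • γ₁ + ⟪x, γ₂⟫ • γ₂‖ := by
  rw [planeCoord, norm_add_mul_I, ← norm_smul_add_smul_sq h₁ h₂ h₁₂, sqrt_sq (norm_nonneg _)]

lemma norm_sub_smul_sub_smul_sq (h₁ : ‖γ₁‖ = 1) (h₂ : ‖γ₂‖ = 1) (h₁₂ : ⟪γ₁, γ₂⟫ = 0)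
    (x : E) (w : ℂ) :
    ‖x - w.re • γ₁ - w.im • γ₂‖ ^ 2 =
      ‖x - (⟪x, γ₁⟫ • γ₁ + ⟪x, γ₂⟫ • γ₂)‖ ^ 2 + dist w (planeCoord γ₁ γ₂ x) ^ 2 := by
  have hγ₁ : ⟪γ₁, γ₁⟫ = 1 := by rw [real_inner_self_eq_norm_sq, h₁, one_pow]
  have hγ₂ : ⟪γ₂, γ₂⟫ = 1 := by rw [real_inner_self_eq_norm_sq, h₂, one_pow]
  rw [dist_eq_norm, Complex.sq_norm, normSq_apply, ← real_inner_self_eq_norm_sq,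
    ← real_inner_self_eq_norm_sq]
  simp only [inner_sub_left, inner_sub_right, inner_add_left, inner_add_right,
    real_inner_smul_left, real_inner_smul_right, hγ₁, hγ₂, h₁₂, real_inner_comm γ₁ γ₂,
    real_inner_comm γ₁ x, real_inner_comm γ₂ x, planeCoord,
    sub_re, sub_im, add_re, add_im, ofReal_re, ofReal_im, mul_re, mul_im, I_re, I_im]
  ring

lemma norm_sub_proj_le (h₁ : ‖γ₁‖ = 1) (h₂ : ‖γ₂‖ = 1) (h₁₂ : ⟪γ₁, γ₂⟫ = 0) (x : E) (w : ℂ) :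
    ‖x - (⟪x, γ₁⟫ • γ₁ + ⟪x, γ₂⟫ • γ₂)‖ ≤ ‖x - w.re • γ₁ - w.im • γ₂‖ := by
  rw [← sq_le_sq₀ (norm_nonneg _) (norm_nonneg _), norm_sub_smul_sub_smul_sq h₁ h₂ h₁₂]
  exact le_add_of_nonneg_right (sq_nonneg _)

lemma dist_planeCoord_le (h₁ : ‖γ₁‖ = 1) (h₂ : ‖γ₂‖ = 1) (h₁₂ : ⟪γ₁, γ₂⟫ = 0) (x : E) (w : ℂ) :
    dist w (planeCoord γ₁ γ₂ x) ≤ ‖x - w.re • γ₁ - w.im • γ₂‖ := by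
  rw [← sq_le_sq₀ dist_nonneg (norm_nonneg _), norm_sub_smul_sub_smul_sq h₁ h₂ h₁₂]
  exact le_add_of_nonneg_left (sq_nonneg _)

end Geometry

lemma integrableOn_ball_zero_inv_norm (r : ℝ) :
    IntegrableOn (fun w : ℂ => ‖w‖⁻¹) (ball 0 r) := by
  rw [integrableOn_fun_norm_addHaar volume (f := fun y : ℝ => y⁻¹)]
  refine (integrableOn_const (C := (1 : ℝ)) measure_Ioo_lt_top.ne).congr_fun
    (fun y hy => ?_) measurableSet_Ioo
  simp [Complex.finrank_real_complex, hy.1.ne']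

lemma setIntegral_ball_zero_inv_norm {r : ℝ} (hr : 0 ≤ r) :
    ∫ w in ball (0 : ℂ) r, ‖w‖⁻¹ = 2 * π * r := by
  have hind : (ball (0 : ℂ) r).indicator (fun w => ‖w‖⁻¹) =
      fun w => (Iio r).indicator (·⁻¹) ‖w‖ := by
    ext w; simp [indicator]
  have hradial : ∫ y in Ioi (0:ℝ), y * (Iio r).indicator (·⁻¹) y = r := by
    rw [setIntegral_congr_fun measurableSet_Ioi (g := (Iio r).indicator 1)
      fun y (hy : 0 < y) => by by_cases h : y < r <;> simp [h, hy.ne'],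
      integral_indicator_one measurableSet_Iio, measureReal_restrict_apply measurableSet_Iio,
      Iio_inter_Ioi, Real.volume_real_Ioo_of_le hr, sub_zero]
  rw [← integral_indicator measurableSet_ball, hind, integral_fun_norm_addHaar]
  simp [hradial, Complex.finrank_real_complex, measureReal_def]
  ring

lemma setIntegral_ball_inv_norm_le (z : ℂ) {R : ℝ} (hR : 0 < R) :
    ∫ w in ball z R, ‖w‖⁻¹ ≤ 6 * π * R * (1 + 2 * R) * (1 + ‖z‖)⁻¹ := by
  rw [le_mul_inv_iff₀ (by positivity)]
  rcases le_or_gt ‖z‖ (2 * R) with hnear | hfar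
  · have hsub : ball z R ⊆ ball 0 (3 * R) :=
      ball_subset_ball' (by rw [dist_zero_right]; linarith)
    have hmono : ∫ w in ball z R, ‖w‖⁻¹ ≤ ∫ w in ball (0 : ℂ) (3 * R), ‖w‖⁻¹ :=
      setIntegral_mono_set (integrableOn_ball_zero_inv_norm _)
        (ae_of_all _ fun w => inv_nonneg.2 (norm_nonneg w)) hsub.eventuallyLE
    rw [setIntegral_ball_zero_inv_norm (by linarith)] at hmono
    have : 0 ≤ ∫ w in ball z R, ‖w‖⁻¹ :=
      setIntegral_nonneg measurableSet_ball fun w _ => by positivity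
    nlinarith [pi_pos]
  · have hz : 0 < ‖z‖ := by linarith
    have hbound : ∀ w ∈ ball z R, ‖‖w‖⁻¹‖ ≤ 2 / ‖z‖ := fun w hw => by
      have : ‖z‖ / 2 < ‖w‖ := by
        have := norm_sub_norm_le z w
        rw [mem_ball, dist_eq_norm, norm_sub_rev] at hw
        linarith
      rw [norm_inv, norm_norm, ← inv_div]
      exact inv_anti₀ (by linarith) this.le
    have hint : ∫ w in ball z R, ‖w‖⁻¹ ≤ 2 / ‖z‖ * volume.real (ball z R) :=
      (le_norm_self _).trans (norm_setIntegral_le_of_norm_le_const measure_ball_lt_top hbound)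
    simp only [measureReal_def, Complex.volume_ball, ENNReal.toReal_mul, ENNReal.toReal_pow,
      ENNReal.toReal_ofReal hR.le, NNReal.coe_real_pi, ENNReal.coe_toReal] at hint
    have h2z : 2 / ‖z‖ * R ≤ 1 := by rw [div_mul_eq_mul_div, div_le_one hz]; linarith
    calc (∫ w in ball z R, ‖w‖⁻¹) * (1 + ‖z‖)
        ≤ 2 / ‖z‖ * (R ^ 2 * π) * (1 + ‖z‖) := by gcongr
      _ = 2 / ‖z‖ * R * (R * π) + 2 * R ^ 2 * π := by field_simp
      _ ≤ 1 * (R * π) + 2 * R ^ 2 * π := by gcongr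
      _ ≤ 6 * π * R * (1 + 2 * R) := by nlinarith [pi_pos]

lemma norm_integral_inv_mul_le_of_support_subset_ball {g : ℂ → ℂ} {K R : ℝ} (z : ℂ) (hR : 0 < R)
    (hg : ∀ w, ‖g w‖ ≤ K) (hsupp : Function.support g ⊆ ball z R) :
    ‖∫ w, w⁻¹ * g w‖ ≤ K * (6 * π * R * (1 + 2 * R)) * (1 + ‖z‖)⁻¹ := by
  have hK : 0 ≤ K := (norm_nonneg _).trans (hg 0)
  have hbound : ∀ w, ‖w⁻¹ * g w‖ ≤ (ball z R).indicator (fun w => K * ‖w‖⁻¹) w := fun w => by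
    by_cases hw : g w = 0
    · simp [hw, indicator_nonneg (fun w _ => by positivity : ∀ w ∈ ball z R, 0 ≤ K * ‖w‖⁻¹)]
    · rw [indicator_of_mem (hsupp hw), norm_mul, norm_inv, mul_comm]
      gcongr
      exact hg w
  have hint : IntegrableOn (fun w : ℂ => ‖w‖⁻¹) (ball z R) :=
    (integrableOn_ball_zero_inv_norm (‖z‖ + R)).mono_set
      (ball_subset_ball' (by rw [dist_zero_right, add_comm]))
  calc ‖∫ w, w⁻¹ * g w‖ ≤ ∫ w, (ball z R).indicator (fun w => K * ‖w‖⁻¹) w :=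
        norm_integral_le_of_norm_le
          (IntegrableOn.integrable_indicator (hint.const_mul K) measurableSet_ball)
          (ae_of_all _ hbound)
    _ = K * ∫ w in ball z R, ‖w‖⁻¹ := by
        rw [integral_indicator measurableSet_ball, integral_const_mul]
    _ ≤ _ := by
        rw [mul_assoc]
        gcongr
        exact setIntegral_ball_inv_norm_le z hR

lemma cauchySol_eq_integral_complex (n : ℕ) (γ₁ γ₂ : EuclideanSpace ℝ (Fin n))
    (f : EuclideanSpace ℝ (Fin n) → ℂ) (x : EuclideanSpace ℝ (Fin n)) :
    cauchySol n γ₁ γ₂ f x = (1 / (2 * π) : ℂ) * ∫ w : ℂ, w⁻¹ * f (x - w.re • γ₁ - w.im • γ₂) := by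
  rw [cauchySol, ← (volume_preserving_equiv_real_prod.symm).integral_comp
    measurableEquivRealProd.symm.measurableEmbedding]
  simp [measurableEquivRealProd_symm_apply, mk_eq_add_mul_I]

theorem stmt1_general (n : ℕ) (M : ℝ) (hM : 0 < M) :
    ∃ C : ℝ, 0 < C ∧ ∀ (f : EuclideanSpace ℝ (Fin n) → ℂ), Measurable f →
      ∀ K : ℝ, (∀ x, ‖f x‖ ≤ K) → (∀ x, M ≤ ‖x‖ → f x = 0) →
      ∀ (γ₁ γ₂ : EuclideanSpace ℝ (Fin n)),
        ‖γ₁‖ = 1 → ‖γ₂‖ = 1 → (inner ℝ γ₁ γ₂ : ℝ) = 0 →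
      ∀ x : EuclideanSpace ℝ (Fin n),
        ‖cauchySol n γ₁ γ₂ f x‖ ≤
          C * K * (1 + ‖(inner ℝ x γ₁ : ℝ) • γ₁ + (inner ℝ x γ₂ : ℝ) • γ₂‖ ^ 2) ^ (-(1:ℝ)/2) *
            Set.indicator (Metric.ball (0 : EuclideanSpace ℝ (Fin n)) M) (fun _ => (1:ℝ))
              (x - ((inner ℝ x γ₁ : ℝ) • γ₁ + (inner ℝ x γ₂ : ℝ) • γ₂)) := by
  refine ⟨3 * M * (1 + 2 * M), by positivity, fun f _ K hK hf γ₁ γ₂ h₁ h₂ h₁₂ x => ?_⟩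
  set xT := ⟪x, γ₁⟫ • γ₁ + ⟪x, γ₂⟫ • γ₂
  have hsupp : ∀ w : ℂ, f (x - w.re • γ₁ - w.im • γ₂) ≠ 0 → ‖x - w.re • γ₁ - w.im • γ₂‖ < M :=
    fun w hw => not_le.1 (mt (hf _) hw)
  rw [cauchySol_eq_integral_complex]
  by_cases hx : x - xT ∈ ball 0 M
  · have hu := norm_integral_inv_mul_le_of_support_subset_ball (planeCoord γ₁ γ₂ x) hM
      (fun w => hK _)
      fun w hw => (dist_planeCoord_le h₁ h₂ h₁₂ x w).trans_lt (hsupp w hw)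
    rw [norm_planeCoord h₁ h₂ h₁₂] at hu
    have hcoef : ‖(1 / (2 * π) : ℂ)‖ = (2 * π)⁻¹ := by simp [pi_pos.le]
    rw [indicator_of_mem hx, mul_one, norm_mul, hcoef]
    calc (2 * π)⁻¹ * ‖∫ w : ℂ, w⁻¹ * f (x - w.re • γ₁ - w.im • γ₂)‖
        ≤ (2 * π)⁻¹ * (K * (6 * π * M * (1 + 2 * M)) * (1 + ‖xT‖)⁻¹) := by gcongr
      _ = 3 * M * (1 + 2 * M) * K * (1 + ‖xT‖)⁻¹ := by field_simp; ring
      _ ≤ _ := by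
        have hK0 : 0 ≤ K := (norm_nonneg _).trans (hK 0)
        gcongr
        exact inv_one_add_le_one_add_sq_rpow_neg_half (norm_nonneg _)
  · have hzero : ∀ w : ℂ, w⁻¹ * f (x - w.re • γ₁ - w.im • γ₂) = 0 := fun w => by
      by_contra hw
      exact hx (mem_ball_zero_iff.2
        ((norm_sub_proj_le h₁ h₂ h₁₂ x w).trans_lt (hsupp w (right_ne_zero_of_mul hw))))
    simp [indicator_of_notMem hx, hzero]

/-- decay estimate `|u(x)| ≤ C ‖f‖_∞ ⟨x_T⟩⁻¹ χ_{B(0,M)}(x_⊥)` for `u = N_μ⁻¹ f`,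
where `x_T` is the projection of `x` onto `span{γ₁, γ₂}` and `x_⊥ = x - x_T`. -/
theorem stmt1 (n : ℕ) (hn : 1 ≤ n) (M : ℝ) (hM : 0 < M) :
    ∃ C : ℝ, 0 < C ∧ ∀ (f : EuclideanSpace ℝ (Fin n) → ℂ), Measurable f →
      ∀ K : ℝ, (∀ x, ‖f x‖ ≤ K) → (∀ x, M ≤ ‖x‖ → f x = 0) →
      ∀ (γ₁ γ₂ : EuclideanSpace ℝ (Fin n)),
        ‖γ₁‖ = 1 → ‖γ₂‖ = 1 → (inner ℝ γ₁ γ₂ : ℝ) = 0 →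
      ∀ x : EuclideanSpace ℝ (Fin n),
        ‖cauchySol n γ₁ γ₂ f x‖ ≤
          C * K * (1 + ‖(inner ℝ x γ₁ : ℝ) • γ₁ + (inner ℝ x γ₂ : ℝ) • γ₂‖ ^ 2) ^ (-(1:ℝ)/2) *
            Set.indicator (Metric.ball (0 : EuclideanSpace ℝ (Fin n)) M) (fun _ => (1:ℝ))
              (x - ((inner ℝ x γ₁ : ℝ) • γ₁ + (inner ℝ x γ₂ : ℝ) • γ₂)) :=
  stmt1_general n M hM
end

section
/- Let γ₁, γ₂ ∈ ℝⁿ satisfy 1−ε ≤ |γⱼ| ≤ 1+ε and |γ₁·γ₂| ≤ ε for ε > 0 sufficiently small. Complete γ₁, γ₂ by an orthonormal basis γ₃,…,γₙ of {γ₁,γ₂}^⊥ and let A be the n×n matrix with columns γ₁,…,γₙ. Then A is invertible and the operator norm satisfies ‖A^{-1}‖ ≤ 3/2. -/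
open scoped BigOperators

set_option maxHeartbeats 1600000 in
lemma key_lb (n : ℕ) (hn : 2 ≤ n) (ε : ℝ) (hε : 0 < ε) (hε' : ε ≤ 1/10)
    (v : Fin n → (Fin n → ℝ))
    (h1 : ∀ j : Fin n, (j : ℕ) < 2 →
      1 - ε ≤ Real.sqrt (∑ i, v j i ^ 2) ∧ Real.sqrt (∑ i, v j i ^ 2) ≤ 1 + ε)
    (h2 : ∀ j k : Fin n, (j : ℕ) < 2 → (k : ℕ) < 2 → j ≠ k → |∑ i, v j i * v k i| ≤ ε)
    (h3 : ∀ j k : Fin n, 2 ≤ (j : ℕ) → 2 ≤ (k : ℕ) →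
      ∑ i, v j i * v k i = if j = k then 1 else 0)
    (h4 : ∀ j k : Fin n, 2 ≤ (j : ℕ) → (k : ℕ) < 2 → ∑ i, v j i * v k i = 0)
    (y : Fin n → ℝ) :
    (4/9 : ℝ) * ∑ i, y i ^ 2 ≤ ∑ i, (∑ j, v j i * y j) ^ 2 := by
  set i0 : Fin n := ⟨0, by omega⟩ with hi0
  set i1 : Fin n := ⟨1, by omega⟩ with hi1
  have hne : i0 ≠ i1 := by simp [hi0, hi1, Fin.ext_iff]
  set g : Fin n → Fin n → ℝ := fun j k => ∑ i, v j i * v k i with hg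
  set e : Fin n → Fin n → ℝ := fun j k => g j k - (if j = k then 1 else 0) with he
  have hsym : ∀ j k, g j k = g k j := by
    intro j k
    exact Finset.sum_congr rfl (fun i _ => mul_comm _ _)
  -- e vanishes unless both indices < 2
  have he0 : ∀ j k : Fin n, 2 ≤ (j : ℕ) ∨ 2 ≤ (k : ℕ) → e j k = 0 := by
    intro j k hjk
    rcases hjk with hj | hk
    · rcases lt_or_ge (k : ℕ) 2 with hk | hk
      · have hv := h4 j k hj hk
        have hjk' : j ≠ k := by intro h; subst h; omega
        simp only [he, hjk', if_false, sub_zero]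
        exact hv
      · simp only [he]; rw [hg]; simp [h3 j k hj hk]
    · rcases lt_or_ge (j : ℕ) 2 with hj | hj
      · have hv := h4 k j hk hj
        have hjk' : j ≠ k := by intro h; subst h; omega
        simp only [he, hjk', if_false, sub_zero, hsym j k]
        exact hv
      · simp only [he]; rw [hg]; simp [h3 j k hj hk]
  -- expansion
  have expand : ∑ i, (∑ j, v j i * y j) ^ 2 = ∑ j, ∑ k, (y j * y k) * g j k := by
    calc ∑ i, (∑ j, v j i * y j) ^ 2
        = ∑ i, ∑ j, ∑ k, (v j i * y j) * (v k i * y k) := by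
          apply Finset.sum_congr rfl; intro i _
          rw [sq, Finset.sum_mul_sum]
      _ = ∑ j, ∑ i, ∑ k, (v j i * y j) * (v k i * y k) := Finset.sum_comm
      _ = ∑ j, ∑ k, ∑ i, (v j i * y j) * (v k i * y k) :=
          Finset.sum_congr rfl (fun j _ => Finset.sum_comm)
      _ = ∑ j, ∑ k, (y j * y k) * g j k := by
          apply Finset.sum_congr rfl; intro j _
          apply Finset.sum_congr rfl; intro k _
          rw [hg, Finset.mul_sum]
          exact Finset.sum_congr rfl (fun i _ => by ring)
  have split : ∑ j, ∑ k, (y j * y k) * g j k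
      = (∑ i, y i ^ 2) + ∑ j, ∑ k, (y j * y k) * e j k := by
    rw [← Finset.sum_add_distrib]
    apply Finset.sum_congr rfl; intro j _
    have step : ∑ k, y j * y k * g j k
        = (∑ k, y j * y k * (if j = k then 1 else 0)) + ∑ k, y j * y k * e j k := by
      rw [← Finset.sum_add_distrib]
      apply Finset.sum_congr rfl; intro k _
      simp only [he]; ring
    rw [step]
    congr 1
    simp [mul_ite, mul_one, mul_zero, Finset.sum_ite_eq, sq]
  -- restriction to the 2x2 block
  have hmem : ∀ j : Fin n, j ∉ ({i0, i1} : Finset (Fin n)) → 2 ≤ (j : ℕ) := by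
    intro j hj
    simp only [Finset.mem_insert, Finset.mem_singleton] at hj
    push_neg at hj
    by_contra h
    push_neg at h
    have : (j : ℕ) = 0 ∨ (j : ℕ) = 1 := by omega
    rcases this with h0 | h0
    · exact hj.1 (Fin.ext (by simp [hi0, h0]))
    · exact hj.2 (Fin.ext (by simp [hi1, h0]))
  have inner_eq : ∀ j, ∑ k, (y j * y k) * e j k
      = ∑ k ∈ ({i0, i1} : Finset (Fin n)), (y j * y k) * e j k := by
    intro j
    refine (Finset.sum_subset (Finset.subset_univ _) ?_).symm
    intro k _ hk
    rw [he0 j k (Or.inr (hmem k hk)), mul_zero]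
  have hrestrict : ∑ j, ∑ k, (y j * y k) * e j k
      = ∑ j ∈ ({i0, i1} : Finset (Fin n)), ∑ k ∈ ({i0, i1} : Finset (Fin n)),
          (y j * y k) * e j k := by
    rw [show (∑ j, ∑ k, (y j * y k) * e j k)
        = ∑ j, ∑ k ∈ ({i0, i1} : Finset (Fin n)), (y j * y k) * e j k from
      Finset.sum_congr rfl fun j _ => inner_eq j]
    refine (Finset.sum_subset (Finset.subset_univ _) ?_).symm
    intro j _ hj
    apply Finset.sum_eq_zero
    intro k _
    rw [he0 j k (Or.inl (hmem j hj)), mul_zero]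
  -- bounds
  have hi0lt : ((i0 : Fin n) : ℕ) < 2 := by simp [hi0]
  have hi1lt : ((i1 : Fin n) : ℕ) < 2 := by simp [hi1]
  have gdiag0 : g i0 i0 = ∑ i, v i0 i ^ 2 :=
    Finset.sum_congr rfl fun i _ => (sq _).symm
  have gdiag1 : g i1 i1 = ∑ i, v i1 i ^ 2 :=
    Finset.sum_congr rfl fun i _ => (sq _).symm
  have ha0 : (0:ℝ) ≤ ∑ i, v i0 i ^ 2 := Finset.sum_nonneg fun i _ => sq_nonneg _
  have hb0 : (0:ℝ) ≤ ∑ i, v i1 i ^ 2 := Finset.sum_nonneg fun i _ => sq_nonneg _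
  have hsa := Real.sq_sqrt ha0
  have hsb := Real.sq_sqrt hb0
  obtain ⟨ha1, ha2⟩ := h1 i0 hi0lt
  obtain ⟨hb1, hb2⟩ := h1 i1 hi1lt
  have h1e : (0:ℝ) ≤ 1 - ε := by linarith
  have haL : (1-ε)^2 ≤ g i0 i0 := by
    rw [gdiag0, ← hsa]; exact pow_le_pow_left₀ h1e ha1 2
  have haU : g i0 i0 ≤ (1+ε)^2 := by
    rw [gdiag0, ← hsa]; exact pow_le_pow_left₀ (Real.sqrt_nonneg _) ha2 2
  have hbL : (1-ε)^2 ≤ g i1 i1 := by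
    rw [gdiag1, ← hsb]; exact pow_le_pow_left₀ h1e hb1 2
  have hbU : g i1 i1 ≤ (1+ε)^2 := by
    rw [gdiag1, ← hsb]; exact pow_le_pow_left₀ (Real.sqrt_nonneg _) hb2 2
  have hc : |g i0 i1| ≤ ε := h2 i0 i1 hi0lt hi1lt hne
  have hc' : |g i1 i0| ≤ ε := h2 i1 i0 hi1lt hi0lt hne.symm
  obtain ⟨hcL, hcU⟩ := abs_le.mp hc
  obtain ⟨hcL', hcU'⟩ := abs_le.mp hc'
  have hy01 : y i0 ^ 2 + y i1 ^ 2 ≤ ∑ i, y i ^ 2 := by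
    have h := Finset.sum_le_sum_of_subset_of_nonneg
      (Finset.subset_univ ({i0, i1} : Finset (Fin n)))
      (fun i _ _ => sq_nonneg (y i))
    rwa [Finset.sum_pair hne] at h
  have hsum0 : (0:ℝ) ≤ ∑ i, y i ^ 2 := Finset.sum_nonneg fun i _ => sq_nonneg _
  have he00 : e i0 i0 = g i0 i0 - 1 := by simp [he]
  have he11 : e i1 i1 = g i1 i1 - 1 := by simp [he]
  have he01 : e i0 i1 = g i0 i1 := by simp [he, hne]
  have he10 : e i1 i0 = g i1 i0 := by simp [he, hne.symm]
  have t1 : (ε^2 - 2*ε) * y i0 ^ 2 ≤ y i0 * y i0 * (g i0 i0 - 1) := by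
    have h : ε^2 - 2*ε ≤ g i0 i0 - 1 := by nlinarith [haL]
    nlinarith [mul_le_mul_of_nonneg_right h (sq_nonneg (y i0))]
  have t1' : (ε^2 - 2*ε) * y i1 ^ 2 ≤ y i1 * y i1 * (g i1 i1 - 1) := by
    have h : ε^2 - 2*ε ≤ g i1 i1 - 1 := by nlinarith [hbL]
    nlinarith [mul_le_mul_of_nonneg_right h (sq_nonneg (y i1))]
  have t2 : -(ε/2) * (y i0 ^ 2 + y i1 ^ 2) ≤ y i0 * y i1 * g i0 i1 := by
    nlinarith [mul_nonneg (by linarith : (0:ℝ) ≤ ε + g i0 i1) (sq_nonneg (y i0 + y i1)),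
      mul_nonneg (by linarith : (0:ℝ) ≤ ε - g i0 i1) (sq_nonneg (y i0 - y i1))]
  have t2' : -(ε/2) * (y i0 ^ 2 + y i1 ^ 2) ≤ y i1 * y i0 * g i1 i0 := by
    nlinarith [mul_nonneg (by linarith : (0:ℝ) ≤ ε + g i1 i0) (sq_nonneg (y i0 + y i1)),
      mul_nonneg (by linarith : (0:ℝ) ≤ ε - g i1 i0) (sq_nonneg (y i0 - y i1))]
  have hq : (0:ℝ) ≤ y i0 ^ 2 + y i1 ^ 2 := by positivity
  have hε3 : (0:ℝ) ≤ 3*ε - ε^2 := by nlinarith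
  have key3 : (3*ε - ε^2) * (y i0 ^ 2 + y i1 ^ 2) ≤ (3/10) * ∑ i, y i ^ 2 :=
    calc (3*ε - ε^2) * (y i0 ^ 2 + y i1 ^ 2) ≤ (3*ε - ε^2) * ∑ i, y i ^ 2 :=
          mul_le_mul_of_nonneg_left hy01 hε3
      _ ≤ (3/10) * ∑ i, y i ^ 2 := by
          apply mul_le_mul_of_nonneg_right _ hsum0
          nlinarith
  rw [expand, split, hrestrict, Finset.sum_pair hne, Finset.sum_pair hne,
    Finset.sum_pair hne, he00, he11, he01, he10]
  linarith [t1, t1', t2, t2', key3, hsum0]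
  /- nlinarith [mul_nonneg (sub_nonneg.2 haL) (sq_nonneg (y i0)),
    mul_nonneg (sub_nonneg.2 hbL) (sq_nonneg (y i1)),
    mul_nonneg (by linarith : (0:ℝ) ≤ ε + g i0 i1) (sq_nonneg (y i0 + y i1)),
    mul_nonneg (by linarith : (0:ℝ) ≤ ε - g i0 i1) (sq_nonneg (y i0 - y i1)),
    mul_nonneg (by linarith : (0:ℝ) ≤ ε + g i1 i0) (sq_nonneg (y i0 + y i1)),
    mul_nonneg (by linarith : (0:ℝ) ≤ ε - g i1 i0) (sq_nonneg (y i0 - y i1)),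
    mul_nonneg (by linarith : (0:ℝ) ≤ 1/10 - ε) (sq_nonneg (y i0)),
    mul_nonneg (by linarith : (0:ℝ) ≤ 1/10 - ε) (sq_nonneg (y i1)),
    mul_nonneg hε.le (sq_nonneg (y i0)), mul_nonneg hε.le (sq_nonneg (y i1)),
    sq_nonneg (y i0), sq_nonneg (y i1), sq_nonneg ε, hy01, hsum0, hε, hε'] -/

/-- if `γ₁, γ₂` are nearly orthonormal (up to ε) and are completed by an
orthonormal basis `γ₃, …, γₙ` of their orthogonal complement, then the matrix `A` with
columns `γ₁, …, γₙ` is invertible and `‖A⁻¹‖ ≤ 3/2`, for ε sufficiently small. -/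
theorem stmt2 (n : ℕ) (hn : 2 ≤ n) :
    ∃ ε₀ : ℝ, 0 < ε₀ ∧ ∀ ε : ℝ, 0 < ε → ε ≤ ε₀ →
      ∀ v : Fin n → (Fin n → ℝ),
        (∀ j : Fin n, (j : ℕ) < 2 →
          1 - ε ≤ Real.sqrt (∑ i, v j i ^ 2) ∧ Real.sqrt (∑ i, v j i ^ 2) ≤ 1 + ε) →
        (∀ j k : Fin n, (j : ℕ) < 2 → (k : ℕ) < 2 → j ≠ k → |∑ i, v j i * v k i| ≤ ε) →
        (∀ j k : Fin n, 2 ≤ (j : ℕ) → 2 ≤ (k : ℕ) →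
          ∑ i, v j i * v k i = if j = k then 1 else 0) →
        (∀ j k : Fin n, 2 ≤ (j : ℕ) → (k : ℕ) < 2 → ∑ i, v j i * v k i = 0) →
        IsUnit (Matrix.of (fun i j : Fin n => v j i)) ∧
        ∀ x : Fin n → ℝ,
          Real.sqrt (∑ i, ((Matrix.of (fun i j : Fin n => v j i))⁻¹.mulVec x i) ^ 2) ≤
            3 / 2 * Real.sqrt (∑ i, x i ^ 2) := by
  refine ⟨1/10, by norm_num, ?_⟩
  intro ε hε hε' v h1 h2 h3 h4
  set A : Matrix (Fin n) (Fin n) ℝ := Matrix.of (fun i j : Fin n => v j i) with hA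
  have hmv : ∀ y : Fin n → ℝ, ∀ i, A.mulVec y i = ∑ j, v j i * y j := by
    intro y i
    simp [hA, Matrix.mulVec, dotProduct]
  have key := fun y => key_lb n hn ε hε hε' v h1 h2 h3 h4 y
  have hinj : Function.Injective A.mulVec := by
    intro y z hyz
    have h0 : A.mulVec (y - z) = 0 := by
      rw [Matrix.mulVec_sub, hyz, sub_self]
    have hzero : ∑ i, (∑ j, v j i * (y - z) j) ^ 2 = 0 := by
      have hz : ∀ i, (∑ j, v j i * (y - z) j) = 0 := by
        intro i
        rw [← hmv (y - z) i, h0]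
        rfl
      exact Finset.sum_eq_zero fun i _ => by rw [hz i]; norm_num
    have hk := key (y - z)
    rw [hzero] at hk
    have hnn : (0:ℝ) ≤ ∑ i, ((y - z) i) ^ 2 := Finset.sum_nonneg fun i _ => sq_nonneg _
    have hsq : ∑ i, ((y - z) i) ^ 2 = 0 := by linarith
    have hall : ∀ i ∈ Finset.univ, ((y - z) i) ^ 2 = 0 :=
      (Finset.sum_eq_zero_iff_of_nonneg (fun i _ => sq_nonneg ((y - z) i))).mp hsq
    funext i
    have := pow_eq_zero_iff (two_ne_zero) |>.mp (hall i (Finset.mem_univ i))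
    have : y i - z i = 0 := this
    linarith
  have hU : IsUnit A := Matrix.mulVec_injective_iff_isUnit.mp hinj
  refine ⟨hU, ?_⟩
  intro x
  have hdet : IsUnit A.det := (Matrix.isUnit_iff_isUnit_det A).mp hU
  have hAAinv : A * A⁻¹ = 1 := Matrix.mul_nonsing_inv A hdet
  set y := A⁻¹.mulVec x with hy
  have hAy : A.mulVec y = x := by
    rw [hy, Matrix.mulVec_mulVec, hAAinv, Matrix.one_mulVec]
  have hk := key y
  have heq : ∑ i, (∑ j, v j i * y j) ^ 2 = ∑ i, x i ^ 2 :=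
    Finset.sum_congr rfl fun i _ => by rw [← hmv y i, hAy]
  rw [heq] at hk
  have h94 : ∑ i, y i ^ 2 ≤ (3/2)^2 * ∑ i, x i ^ 2 := by linarith
  calc Real.sqrt (∑ i, y i ^ 2) ≤ Real.sqrt ((3/2)^2 * ∑ i, x i ^ 2) :=
        Real.sqrt_le_sqrt h94
    _ = 3/2 * Real.sqrt (∑ i, x i ^ 2) := by
        rw [Real.sqrt_mul (by positivity), Real.sqrt_sq (by norm_num)]
end

section
/- Let n ≥ 3, let μ = e₁ + ie₂, and let W ∈ C_c¹(ℝⁿ; ℂⁿ) with supp W ⊆ B(0,M). Let φ = N_μ^{-1}(−μ·W) solve (∂₁ + i∂₂)φ = −(W₁ + iW₂) with the decay |φ(x)| ≤ C⟨x'⟩^{-1} where x' = (x₁,x₂). Then for each fixed x'' ∈ ℝ^{n−2}, lim_{R→∞} i ∫_{|x'|=R} e^{iφ(x',x'')}(ν₁ + iν₂) dS(x') = ∫_{ℝ²} (e₁+ie₂)·W(x',x'') dx'. -/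
/-!
On the slice `x'' = const` put `ψ = φ(·, x'')` and `V = W₁ + iW₂`. On the circle `|x'| = R`,
of length `2πR`, `e^{iψ} = 1 + iψ + O(R⁻²)`, and `∫ (ν₁ + iν₂) dS = 0`, so
`i ∫ e^{iψ} (ν₁ + iν₂) dS = -∫ ψ (ν₁ + iν₂) dS + O(R⁻¹)`. By the divergence theorem,
applied in polar coordinates on `[0, R] × [0, 2π]`,
`∫_{|x'|=R} ψ (ν₁ + iν₂) dS = ∫_{|x'|≤R} (∂₁ + i∂₂)ψ`,
which is `-∫ V` as soon as the disc contains the support of `V`.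
-/

open MeasureTheory Complex Filter Set
open scoped Real Topology

noncomputable def complexNormal (θ : ℝ) : ℂ := (Real.cos θ : ℂ) + (Real.sin θ : ℂ) * I

/-- `∫_{|x| = R} f (ν₁ + iν₂) dS`, with `ν₁ + iν₂ = complexNormal θ` and `dS = R dθ`. -/
noncomputable def circleNormalIntegral (f : ℝ × ℝ → ℂ) (R : ℝ) : ℂ :=
  ∫ θ in (0:ℝ)..2 * π, f (R * Real.cos θ, R * Real.sin θ) * complexNormal θ * R

@[fun_prop]
theorem differentiable_complexNormal : Differentiable ℝ complexNormal := by
  unfold complexNormal; fun_prop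

@[fun_prop]
theorem continuous_complexNormal : Continuous complexNormal :=
  differentiable_complexNormal.continuous

theorem norm_complexNormal (θ : ℝ) : ‖complexNormal θ‖ = 1 := by
  simp [complexNormal]

theorem hasDerivAt_complexNormal (θ : ℝ) :
    HasDerivAt complexNormal (I * complexNormal θ) θ := by
  refine (((Real.hasDerivAt_cos θ).ofReal_comp).add
    (((Real.hasDerivAt_sin θ).ofReal_comp).mul_const I)).congr_deriv ?_
  simp only [complexNormal, ofReal_neg]
  linear_combination -(Real.sin θ : ℂ) * I_sq

theorem complexNormal_two_pi : complexNormal (2 * π) = complexNormal 0 := by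
  simp [complexNormal]

theorem integral_complexNormal : ∫ θ in (0:ℝ)..2 * π, complexNormal θ = 0 := by
  simp only [complexNormal]
  rw [intervalIntegral.integral_add ((by fun_prop : Continuous _).intervalIntegrable _ _)
    ((by fun_prop : Continuous _).intervalIntegrable _ _), intervalIntegral.integral_mul_const,
    intervalIntegral.integral_ofReal, intervalIntegral.integral_ofReal, integral_cos,
    integral_sin]
  simp

theorem circleNormalIntegral_const (c : ℂ) (R : ℝ) :
    circleNormalIntegral (fun _ => c) R = 0 := by
  simp only [circleNormalIntegral, mul_comm c, mul_assoc, intervalIntegral.integral_mul_const,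
    integral_complexNormal, zero_mul]

theorem circleNormalIntegral_add {f g : ℝ × ℝ → ℂ} (hf : Continuous f) (hg : Continuous g)
    (R : ℝ) :
    circleNormalIntegral (f + g) R = circleNormalIntegral f R + circleNormalIntegral g R := by
  simp only [circleNormalIntegral, Pi.add_apply, add_mul]
  exact intervalIntegral.integral_add ((by fun_prop : Continuous _).intervalIntegrable _ _)
    ((by fun_prop : Continuous _).intervalIntegrable _ _)

theorem circleNormalIntegral_const_mul (c : ℂ) (f : ℝ × ℝ → ℂ) (R : ℝ) :
    circleNormalIntegral (fun q => c * f q) R = c * circleNormalIntegral f R := by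
  simp only [circleNormalIntegral, mul_assoc, intervalIntegral.integral_const_mul]

theorem norm_circleNormalIntegral_le {f : ℝ × ℝ → ℂ} {R B : ℝ} (hR : 0 ≤ R)
    (hf : ∀ θ, ‖f (R * Real.cos θ, R * Real.sin θ)‖ ≤ B) :
    ‖circleNormalIntegral f R‖ ≤ B * R * (2 * π) := by
  have := intervalIntegral.norm_integral_le_of_norm_le_const (a := 0) (b := 2 * π)
    (f := fun θ => f (R * Real.cos θ, R * Real.sin θ) * complexNormal θ * R) (C := B * R)
    fun θ _ => by
      rw [norm_mul, norm_mul, norm_complexNormal, mul_one, norm_real, Real.norm_of_nonneg hR]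
      exact mul_le_mul_of_nonneg_right (hf θ) hR
  rwa [sub_zero, abs_of_pos Real.two_pi_pos] at this

theorem circleNormalIntegral_exp_I_mul {ψ : ℝ × ℝ → ℂ} (hψ : Continuous ψ) (R : ℝ) :
    circleNormalIntegral (fun q => exp (I * ψ q)) R =
      circleNormalIntegral (fun q => exp (I * ψ q) - 1 - I * ψ q) R +
        I * circleNormalIntegral ψ R := by
  have hsplit : (fun q => exp (I * ψ q)) =
      (fun q => exp (I * ψ q) - 1 - I * ψ q) + ((fun _ => 1) + fun q => I * ψ q) := by
    ext q; simp only [Pi.add_apply]; ring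
  rw [hsplit, circleNormalIntegral_add (by fun_prop) (by fun_prop),
    circleNormalIntegral_add continuous_const (by fun_prop), circleNormalIntegral_const,
    circleNormalIntegral_const_mul, zero_add]

theorem tendsto_circleNormalIntegral_exp_sub_one_sub {ψ : ℝ × ℝ → ℂ} {C : ℝ}
    (hdecay : ∀ R > 0, ∀ θ, ‖ψ (R * Real.cos θ, R * Real.sin θ)‖ ≤ C / R) :
    Tendsto (fun R => circleNormalIntegral (fun q => exp (I * ψ q) - 1 - I * ψ q) R)
      atTop (𝓝 0) := by
  have hbound : ∀ᶠ R in atTop,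
      ‖circleNormalIntegral (fun q => exp (I * ψ q) - 1 - I * ψ q) R‖ ≤
        2 * π * C ^ 2 / R := by
    filter_upwards [eventually_gt_atTop 0, eventually_ge_atTop C] with R hR hCR
    have hpoint : ∀ θ, ‖exp (I * ψ (R * Real.cos θ, R * Real.sin θ)) - 1 -
        I * ψ (R * Real.cos θ, R * Real.sin θ)‖ ≤ (C / R) ^ 2 := by
      intro θ
      have hψθ : ‖I * ψ (R * Real.cos θ, R * Real.sin θ)‖ ≤ C / R := by
        simpa using hdecay R hR θ
      calc _ ≤ ‖I * ψ (R * Real.cos θ, R * Real.sin θ)‖ ^ 2 :=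
            norm_exp_sub_one_sub_id_le (hψθ.trans ((div_le_one hR).mpr hCR))
        _ ≤ (C / R) ^ 2 := pow_le_pow_left₀ (norm_nonneg _) hψθ 2
    calc _ ≤ (C / R) ^ 2 * R * (2 * π) := norm_circleNormalIntegral_le hR.le hpoint
      _ = 2 * π * C ^ 2 / R := by field_simp
  exact squeeze_zero_norm' hbound (tendsto_const_nhds.div_atTop tendsto_id)

theorem hasDerivAt_comp_prodMk {E : Type*} [NormedAddCommGroup E] [NormedSpace ℝ E]
    {ψ : ℝ × ℝ → E} {a b : ℝ → ℝ} {a' b' t : ℝ} (hψ : DifferentiableAt ℝ ψ (a t, b t))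
    (ha : HasDerivAt a a' t) (hb : HasDerivAt b b' t) :
    HasDerivAt (fun s => ψ (a s, b s))
      (a' • fderiv ℝ ψ (a t, b t) (1, 0) + b' • fderiv ℝ ψ (a t, b t) (0, 1)) t := by
  refine (hψ.hasFDerivAt.comp_hasDerivAt t (ha.prodMk hb)).congr_deriv ?_
  rw [← map_smul, ← map_smul, ← map_add]
  simp

theorem fderiv_apply_one_zero {E : Type*} [NormedAddCommGroup E] [NormedSpace ℝ E]
    {F : ℝ × ℝ → E} {x y : ℝ} (hF : DifferentiableAt ℝ F (x, y)) :
    fderiv ℝ F (x, y) (1, 0) = deriv (fun t => F (t, y)) x :=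
  (hF.hasFDerivAt.comp_hasDerivAt x
    ((hasDerivAt_id x).prodMk (hasDerivAt_const x y))).deriv.symm

theorem fderiv_apply_zero_one {E : Type*} [NormedAddCommGroup E] [NormedSpace ℝ E]
    {F : ℝ × ℝ → E} {x y : ℝ} (hF : DifferentiableAt ℝ F (x, y)) :
    fderiv ℝ F (x, y) (0, 1) = deriv (fun t => F (x, t)) y :=
  (hF.hasFDerivAt.comp_hasDerivAt y
    ((hasDerivAt_const y x).prodMk (hasDerivAt_id y))).deriv.symm

/-- In polar coordinates `r (∂₁ + i∂₂) = e^{iθ} (r ∂_r + i ∂_θ)`, so `r (∂₁ + i∂₂)ψ` is the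
`(r, θ)`-divergence of the field `(ψ e^{iθ} r, iψ e^{iθ})`. -/
theorem polar_divergence_eq {ψ V : ℝ × ℝ → ℂ} (hψ : Differentiable ℝ ψ)
    (hψV : ∀ q, fderiv ℝ ψ q (1, 0) + I * fderiv ℝ ψ q (0, 1) = -V q) (r θ : ℝ) :
    fderiv ℝ (fun p : ℝ × ℝ => ψ (p.1 * Real.cos p.2, p.1 * Real.sin p.2) *
          complexNormal p.2 * p.1) (r, θ) (1, 0) +
        fderiv ℝ (fun p : ℝ × ℝ => I * ψ (p.1 * Real.cos p.2, p.1 * Real.sin p.2) *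
          complexNormal p.2) (r, θ) (0, 1) =
      -(V (r * Real.cos θ, r * Real.sin θ) * r) := by
  have hradial :
      HasDerivAt (fun t : ℝ => ψ (t * Real.cos θ, t * Real.sin θ) * complexNormal θ * t) _ r :=
    ((hasDerivAt_comp_prodMk (hψ _) ((hasDerivAt_id r).mul_const (Real.cos θ))
      ((hasDerivAt_id r).mul_const (Real.sin θ))).mul_const (complexNormal θ)).mul
        (hasDerivAt_id r).ofReal_comp
  have hangular :
      HasDerivAt (fun t : ℝ => I * ψ (r * Real.cos t, r * Real.sin t) * complexNormal t) _ θ :=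
    ((hasDerivAt_comp_prodMk (hψ _) ((Real.hasDerivAt_cos θ).const_mul r)
      ((Real.hasDerivAt_sin θ).const_mul r)).const_mul I).mul (hasDerivAt_complexNormal θ)
  rw [fderiv_apply_one_zero (by fun_prop), fderiv_apply_zero_one (by fun_prop)]
  dsimp only
  rw [hradial.deriv, hangular.deriv]
  have hψq := hψV (r * Real.cos θ, r * Real.sin θ)
  have hcs : (Real.cos θ : ℂ) ^ 2 + (Real.sin θ : ℂ) ^ 2 = 1 := by
    exact_mod_cast Real.cos_sq_add_sin_sq θ
  simp only [complexNormal, id, one_mul, mul_one, real_smul, ofReal_one, ofReal_mul,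
    ofReal_neg] at hψq ⊢
  set a := fderiv ℝ ψ (r * Real.cos θ, r * Real.sin θ) (1, 0)
  set b := fderiv ℝ ψ (r * Real.cos θ, r * Real.sin θ) (0, 1)
  set c : ℂ := (Real.cos θ : ℂ)
  set s : ℂ := (Real.sin θ : ℂ)
  linear_combination
    (ψ (r * Real.cos θ, r * Real.sin θ) * (c + s * I) + r * s * b * (c + s * I) -
      r * s ^ 2 * (a + I * b)) * I_sq + r * (a + I * b) * hcs + r * hψq

theorem circleNormalIntegral_eq_neg_integral_polar {ψ V : ℝ × ℝ → ℂ} (hψ : Differentiable ℝ ψ)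
    (hV : Continuous V)
    (hψV : ∀ q, fderiv ℝ ψ q (1, 0) + I * fderiv ℝ ψ q (0, 1) = -V q) (R : ℝ) :
    circleNormalIntegral ψ R =
      -∫ r in (0:ℝ)..R, ∫ θ in (0:ℝ)..2 * π, V (r * Real.cos θ, r * Real.sin θ) * r := by
  set u : ℝ × ℝ → ℂ := fun p => ψ (p.1 * Real.cos p.2, p.1 * Real.sin p.2) *
    complexNormal p.2 * p.1
  set g : ℝ × ℝ → ℂ := fun p => I * ψ (p.1 * Real.cos p.2, p.1 * Real.sin p.2) *
    complexNormal p.2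
  have hu : Differentiable ℝ u := by fun_prop
  have hg : Differentiable ℝ g := by fun_prop
  have hdiv : ∀ p : ℝ × ℝ, fderiv ℝ u p (1, 0) + fderiv ℝ g p (0, 1) =
      -(V (p.1 * Real.cos p.2, p.1 * Real.sin p.2) * p.1) :=
    fun p => polar_divergence_eq hψ hψV p.1 p.2
  have hint : IntegrableOn (fun p => fderiv ℝ u p (1, 0) + fderiv ℝ g p (0, 1))
      (uIcc 0 R ×ˢ uIcc 0 (2 * π)) := by
    simp only [hdiv]
    exact (by fun_prop : Continuous _).continuousOn.integrableOn_compact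
      (isCompact_uIcc.prod isCompact_uIcc)
  have hgreen := integral2_divergence_prod_of_hasFDerivAt_off_countable u g (fderiv ℝ u)
    (fderiv ℝ g) 0 0 R (2 * π) ∅ countable_empty hu.continuous.continuousOn
    hg.continuous.continuousOn (fun p _ => (hu p).hasFDerivAt) (fun p _ => (hg p).hasFDerivAt)
    hint
  simp only [hdiv, u, g, complexNormal_two_pi, Real.cos_two_pi, Real.sin_two_pi, Real.cos_zero,
    Real.sin_zero, sub_self, zero_add, ofReal_zero, mul_zero, intervalIntegral.integral_zero,
    sub_zero, intervalIntegral.integral_neg] at hgreen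
  exact hgreen.symm

theorem integral_Ioo_neg_pi_pi_eq_integral_zero_two_pi {E : Type*} [NormedAddCommGroup E]
    [NormedSpace ℝ E] {f : ℝ → E} (hf : Function.Periodic f (2 * π)) :
    ∫ θ in Ioo (-π) π, f θ = ∫ θ in (0:ℝ)..2 * π, f θ := by
  have := hf.intervalIntegral_add_eq (-π) 0
  rw [show -π + 2 * π = π by ring, zero_add] at this
  rw [← this, intervalIntegral.integral_of_le (by linarith [Real.pi_pos]),
    integral_Ioc_eq_integral_Ioo]

theorem integral_eq_integral_polar {V : ℝ × ℝ → ℂ} (hV : Continuous V) {R : ℝ} (hR : 0 ≤ R)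
    (hVR : ∀ q : ℝ × ℝ, R ^ 2 < q.1 ^ 2 + q.2 ^ 2 → V q = 0) :
    ∫ q, V q =
      ∫ r in (0:ℝ)..R, ∫ θ in (0:ℝ)..2 * π, V (r * Real.cos θ, r * Real.sin θ) * r := by
  set F : ℝ × ℝ → ℂ := fun p => V (p.1 * Real.cos p.2, p.1 * Real.sin p.2) * p.1
  have hF : Continuous F := by fun_prop
  have hF_out : ∀ p ∈ Ioi 0 ×ˢ Ioo (-π) π \ Ioc 0 R ×ˢ Ioo (-π) π, F p = 0 := by
    rintro ⟨r, θ⟩ ⟨⟨hr, hθ⟩, hnot⟩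
    have hRr : R < r := not_le.mp fun h => hnot ⟨⟨hr, h⟩, hθ⟩
    have hsq : (r * Real.cos θ) ^ 2 + (r * Real.sin θ) ^ 2 = r ^ 2 := by
      linear_combination r ^ 2 * Real.cos_sq_add_sin_sq θ
    have hV0 : V (r * Real.cos θ, r * Real.sin θ) = 0 := hVR _ (by rw [hsq]; nlinarith)
    simp only [F, hV0, zero_mul]
  have hF_int : IntegrableOn F (Ioc 0 R ×ˢ Ioo (-π) π) :=
    (hF.continuousOn.integrableOn_compact (isCompact_Icc.prod isCompact_Icc)).mono_set
      (prod_mono Ioc_subset_Icc_self Ioo_subset_Icc_self)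
  calc ∫ q, V q = ∫ p in Ioi 0 ×ˢ Ioo (-π) π, F p := by
        rw [← integral_comp_polarCoord_symm, polarCoord_target]
        refine setIntegral_congr_fun (measurableSet_Ioi.prod measurableSet_Ioo) fun p _ => ?_
        simp only [polarCoord_symm_apply, real_smul, F, mul_comm]
    _ = ∫ p in Ioc 0 R ×ˢ Ioo (-π) π, F p :=
        setIntegral_eq_of_subset_of_forall_sdiff_eq_zero
          (measurableSet_Ioi.prod measurableSet_Ioo)
          (prod_mono Ioc_subset_Ioi_self subset_rfl) hF_out
    _ = ∫ r in Ioc 0 R, ∫ θ in Ioo (-π) π, F (r, θ) := by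
        rw [Measure.volume_eq_prod, setIntegral_prod _ hF_int]
    _ = _ := by
        rw [intervalIntegral.integral_of_le hR]
        refine setIntegral_congr_fun measurableSet_Ioc fun r _ => ?_
        exact integral_Ioo_neg_pi_pi_eq_integral_zero_two_pi fun θ => by
          simp only [F, Real.cos_add_two_pi, Real.sin_add_two_pi]

theorem circleNormalIntegral_eq_neg_integral {ψ V : ℝ × ℝ → ℂ} (hψ : Differentiable ℝ ψ)
    (hV : Continuous V)
    (hψV : ∀ q, fderiv ℝ ψ q (1, 0) + I * fderiv ℝ ψ q (0, 1) = -V q) {R : ℝ} (hR : 0 ≤ R)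
    (hVR : ∀ q : ℝ × ℝ, R ^ 2 < q.1 ^ 2 + q.2 ^ 2 → V q = 0) :
    circleNormalIntegral ψ R = -∫ q, V q := by
  rw [circleNormalIntegral_eq_neg_integral_polar hψ hV hψV, integral_eq_integral_polar hV hR hVR]

theorem tendsto_I_mul_circleNormalIntegral_exp_I_mul {ψ V : ℝ × ℝ → ℂ} {M C : ℝ}
    (hψ : Differentiable ℝ ψ) (hV : Continuous V)
    (hψV : ∀ q, fderiv ℝ ψ q (1, 0) + I * fderiv ℝ ψ q (0, 1) = -V q)
    (hVM : ∀ q : ℝ × ℝ, M ^ 2 ≤ q.1 ^ 2 + q.2 ^ 2 → V q = 0)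
    (hdecay : ∀ R > 0, ∀ θ, ‖ψ (R * Real.cos θ, R * Real.sin θ)‖ ≤ C / R) :
    Tendsto (fun R => I * circleNormalIntegral (fun q => exp (I * ψ q)) R) atTop
      (𝓝 (∫ q, V q)) := by
  have hsplit : ∀ᶠ R in atTop,
      I * circleNormalIntegral (fun q => exp (I * ψ q) - 1 - I * ψ q) R + ∫ q, V q =
        I * circleNormalIntegral (fun q => exp (I * ψ q)) R := by
    filter_upwards [eventually_ge_atTop |M|] with R hR
    have hVR : ∀ q : ℝ × ℝ, R ^ 2 < q.1 ^ 2 + q.2 ^ 2 → V q = 0 := fun q hq =>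
      hVM q ((sq_le_sq' (neg_le_of_abs_le hR) (le_of_abs_le hR)).trans hq.le)
    rw [circleNormalIntegral_exp_I_mul hψ.continuous,
      circleNormalIntegral_eq_neg_integral hψ hV hψV ((abs_nonneg M).trans hR) hVR]
    linear_combination (∫ q, V q) * I_sq
  refine Tendsto.congr' hsplit ?_
  simpa using ((tendsto_circleNormalIntegral_exp_sub_one_sub hdecay).const_mul I).add_const
    (∫ q, V q)

theorem fderiv_comp_prodMk_const_apply {E F : Type*} [NormedAddCommGroup E] [NormedSpace ℝ E]
    [NormedAddCommGroup F] [NormedSpace ℝ F] {φ : ℝ × ℝ × E → F} (e : E) {q : ℝ × ℝ}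
    (hφ : DifferentiableAt ℝ φ (q.1, q.2, e)) (v : ℝ × ℝ) :
    fderiv ℝ (fun p : ℝ × ℝ => φ (p.1, p.2, e)) q v =
      fderiv ℝ φ (q.1, q.2, e) (v.1, v.2, 0) := by
  have h : HasFDerivAt (fun p : ℝ × ℝ => φ (p.1, p.2, e)) _ q := hφ.hasFDerivAt.comp q
    (hasFDerivAt_fst.prodMk (hasFDerivAt_snd.prodMk (hasFDerivAt_const e q)))
  rw [h.fderiv]
  rfl

theorem one_add_sq_rpow_neg_half_le_inv {R : ℝ} (hR : 0 < R) :
    (1 + R ^ 2) ^ (-(1:ℝ) / 2) ≤ R⁻¹ := by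
  rw [neg_div, Real.rpow_neg (by positivity), ← Real.sqrt_eq_rpow]
  exact inv_anti₀ hR (Real.le_sqrt_of_sq_le (by linarith))

theorem stmt9_general (m : ℕ) (M C : ℝ)
    (W₁ W₂ : ℝ × ℝ × EuclideanSpace ℝ (Fin m) → ℂ)
    (hW₁ : ContDiff ℝ 1 W₁) (hW₂ : ContDiff ℝ 1 W₂)
    (hsupp : ∀ p : ℝ × ℝ × EuclideanSpace ℝ (Fin m),
      M ^ 2 ≤ p.1 ^ 2 + p.2.1 ^ 2 + ‖p.2.2‖ ^ 2 → W₁ p = 0 ∧ W₂ p = 0)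
    (φ : ℝ × ℝ × EuclideanSpace ℝ (Fin m) → ℂ) (hφ : ContDiff ℝ 1 φ)
    (hφeq : ∀ p, fderiv ℝ φ p (1, 0, 0) + I * fderiv ℝ φ p (0, 1, 0) = -(W₁ p + I * W₂ p))
    (hφdecay : ∀ p, ‖φ p‖ ≤ C * (1 + p.1 ^ 2 + p.2.1 ^ 2) ^ (-(1:ℝ)/2)) :
    ∀ x'' : EuclideanSpace ℝ (Fin m),
      Tendsto (fun R : ℝ =>
          I * ∫ θ in (0:ℝ)..(2 * Real.pi),
            Complex.exp (I * φ (R * Real.cos θ, R * Real.sin θ, x'')) *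
              ((Real.cos θ : ℂ) + (Real.sin θ : ℂ) * I) * (R : ℂ))
        atTop
        (nhds (∫ y : ℝ × ℝ, (W₁ (y.1, y.2, x'') + I * W₂ (y.1, y.2, x'')))) := by
  intro x''
  have hφd : Differentiable ℝ φ := hφ.differentiable one_ne_zero
  have hC : 0 ≤ C := by simpa using (norm_nonneg _).trans (hφdecay 0)
  refine tendsto_I_mul_circleNormalIntegral_exp_I_mul (ψ := fun q => φ (q.1, q.2, x''))
    (V := fun q => W₁ (q.1, q.2, x'') + I * W₂ (q.1, q.2, x'')) (M := M) (C := C) (by fun_prop)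
    (by fun_prop) (fun q => ?_) (fun q hq => ?_) (fun R hR θ => ?_)
  · rw [fderiv_comp_prodMk_const_apply x'' (hφd _), fderiv_comp_prodMk_const_apply x'' (hφd _)]
    exact hφeq _
  · obtain ⟨h₁, h₂⟩ := hsupp (q.1, q.2, x'') (by dsimp only; nlinarith [sq_nonneg ‖x''‖])
    simp [h₁, h₂]
  · have hcs : 1 + (R * Real.cos θ) ^ 2 + (R * Real.sin θ) ^ 2 = 1 + R ^ 2 := by
      linear_combination R ^ 2 * Real.cos_sq_add_sin_sq θ
    calc _ ≤ C * (1 + R ^ 2) ^ (-(1:ℝ) / 2) :=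
          hcs ▸ hφdecay (R * Real.cos θ, R * Real.sin θ, x'')
      _ ≤ C / R := mul_le_mul_of_nonneg_left (one_add_sq_rpow_neg_half_le_inv hR) hC

/-- the Eskin–Ralston circle-integral computation. We model `ℝⁿ`, `n = m + 2 ≥ 3`,
as `ℝ × ℝ × ℝᵐ`; `W₁, W₂` are the first two components of a `C¹` vector field supported in
`B(0,M)`, and `φ` solves `(∂₁ + i∂₂)φ = -(W₁ + iW₂)` with decay `|φ| ≤ C⟨x'⟩⁻¹`. Then for
every fixed `x''`,
`lim_{R→∞} i ∫_{|x'|=R} e^{iφ}(ν₁+iν₂) dS = ∫_{ℝ²} (W₁+iW₂) dx'`,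
the circle integral being written in polar coordinates. -/
theorem stmt9 (m : ℕ) (hm : 1 ≤ m) (M C : ℝ) (hM : 0 < M)
    (W₁ W₂ : ℝ × ℝ × EuclideanSpace ℝ (Fin m) → ℂ)
    (hW₁ : ContDiff ℝ 1 W₁) (hW₂ : ContDiff ℝ 1 W₂)
    (hsupp : ∀ p : ℝ × ℝ × EuclideanSpace ℝ (Fin m),
      M ^ 2 ≤ p.1 ^ 2 + p.2.1 ^ 2 + ‖p.2.2‖ ^ 2 → W₁ p = 0 ∧ W₂ p = 0)
    (φ : ℝ × ℝ × EuclideanSpace ℝ (Fin m) → ℂ) (hφ : ContDiff ℝ 1 φ)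
    (hφeq : ∀ p, fderiv ℝ φ p (1, 0, 0) + I * fderiv ℝ φ p (0, 1, 0) = -(W₁ p + I * W₂ p))
    (hφdecay : ∀ p, ‖φ p‖ ≤ C * (1 + p.1 ^ 2 + p.2.1 ^ 2) ^ (-(1:ℝ)/2)) :
    ∀ x'' : EuclideanSpace ℝ (Fin m),
      Tendsto (fun R : ℝ =>
          I * ∫ θ in (0:ℝ)..(2 * Real.pi),
            Complex.exp (I * φ (R * Real.cos θ, R * Real.sin θ, x'')) *
              ((Real.cos θ : ℂ) + (Real.sin θ : ℂ) * I) * (R : ℂ))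
        atTop
        (nhds (∫ y : ℝ × ℝ, (W₁ (y.1, y.2, x'') + I * W₂ (y.1, y.2, x'')))) :=
  stmt9_general m M C W₁ W₂ hW₁ hW₂ hsupp φ hφ hφeq hφdecay
end
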